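/- arXiv:2110.06084 — 6 statements merged into one kernel-verified Lean document; each statement's English description precedes it below -/
import Mathlib

section
/- Let G be a finite group with complete set of unitary irreducible representations Ĝ, and let x, w₁, ..., w_L : G → ℝ. Then the inner product ⟨x ⋆ w₁ ⋆ ⋯ ⋆ w_{L−1}, w_L⟩ (where ⋆ is group cross-correlation and ⟨·,·⟩ the standard inner product on ℝ^{|G|}) equals (1/|G|) ∑_{ρ ∈ Ĝ} d_ρ · Tr[ x̂(ρ) ŵ₁(ρ)† ⋯ ŵ_L(ρ)† ]. -/
open Matrix BigOperators

/-- Cross-correlation over a finite group: `(g ⋆ h)(u) = ∑_{v ∈ G} g(uv) h(v)`. -/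
noncomputable def crossCorr {G : Type*} [Group G] [Fintype G] (g h : G → ℂ) (u : G) : ℂ :=
  ∑ v : G, g (u * v) * h v

/-- Group Fourier transform of `f` at a (matrix) representation `ρ`. -/
noncomputable def gft {G : Type*} [Group G] [Fintype G] {d : ℕ}
    (f : G → ℂ) (ρ : G → Matrix (Fin d) (Fin d) ℂ) : Matrix (Fin d) (Fin d) ℂ :=
  ∑ u : G, f u • ρ u

/-- `iterCorr x w n = x ⋆ w 1 ⋆ ⋯ ⋆ w n` (iterated cross-correlation). -/
noncomputable def iterCorr {G : Type*} [Group G] [Fintype G]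
    (x : G → ℂ) (w : ℕ → G → ℂ) : ℕ → G → ℂ
  | 0 => x
  | n + 1 => crossCorr (iterCorr x w n) (w (n + 1))

/-- `hatProd ρ w n = ŵ₁(ρ)† ⋯ ŵₙ(ρ)†`. -/
noncomputable def hatProd {G : Type*} [Group G] [Fintype G] {d : ℕ}
    (ρ : G → Matrix (Fin d) (Fin d) ℂ) (w : ℕ → G → ℂ) : ℕ → Matrix (Fin d) (Fin d) ℂ
  | 0 => 1
  | n + 1 => hatProd ρ w n * (gft (w (n + 1)) ρ)ᴴ

lemma rho_inv {G : Type*} [Group G] {d : ℕ} {ρ : G → Matrix (Fin d) (Fin d) ℂ}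
    (hmul : ∀ a b : G, ρ (a * b) = ρ a * ρ b) (hone : ρ 1 = 1)
    (hunitary : ∀ u : G, ρ u * (ρ u)ᴴ = 1) (v : G) : ρ v⁻¹ = (ρ v)ᴴ := by
  have h2 : ρ v⁻¹ * ρ v = 1 := by rw [← hmul, inv_mul_cancel, hone]
  calc ρ v⁻¹ = ρ v⁻¹ * (ρ v * (ρ v)ᴴ) := by rw [hunitary, mul_one]
    _ = (ρ v)ᴴ := by rw [← mul_assoc, h2, one_mul]

lemma gft_crossCorr {G : Type*} [Group G] [Fintype G] {d : ℕ}
    {ρ : G → Matrix (Fin d) (Fin d) ℂ}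
    (hmul : ∀ a b : G, ρ (a * b) = ρ a * ρ b) (hone : ρ 1 = 1)
    (hunitary : ∀ u : G, ρ u * (ρ u)ᴴ = 1)
    (g : G → ℂ) (h : G → ℝ) :
    gft (crossCorr g (fun a => (h a : ℂ))) ρ
      = gft g ρ * (gft (fun a => (h a : ℂ)) ρ)ᴴ := by
  unfold gft crossCorr
  rw [Matrix.conjTranspose_sum, Finset.sum_mul_sum]
  simp only [Matrix.conjTranspose_smul, Complex.star_def, Complex.conj_ofReal,
    Matrix.smul_mul, Matrix.mul_smul, Finset.sum_smul]
  rw [Finset.sum_comm]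
  conv_rhs => rw [Finset.sum_comm]
  refine Finset.sum_congr rfl fun v _ => ?_
  rw [← Equiv.sum_comp (Equiv.mulRight v⁻¹) (fun u => (g (u * v) * (h v : ℂ)) • ρ u)]
  refine Finset.sum_congr rfl fun t _ => ?_
  simp only [Equiv.coe_mulRight, inv_mul_cancel_right]
  rw [hmul, rho_inv hmul hone hunitary v, smul_comm]
  exact (smul_smul _ _ _).symm

lemma gft_iterCorr {G : Type*} [Group G] [Fintype G] {d : ℕ}
    {ρ : G → Matrix (Fin d) (Fin d) ℂ}
    (hmul : ∀ a b : G, ρ (a * b) = ρ a * ρ b) (hone : ρ 1 = 1)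
    (hunitary : ∀ u : G, ρ u * (ρ u)ᴴ = 1)
    (x : G → ℝ) (w : ℕ → G → ℝ) (n : ℕ) :
    gft (iterCorr (fun a => (x a : ℂ)) (fun k a => (w k a : ℂ)) n) ρ
      = gft (fun a => (x a : ℂ)) ρ * hatProd ρ (fun k a => (w k a : ℂ)) n := by
  induction n with
  | zero => simp [iterCorr, hatProd]
  | succ n ih =>
      show gft (crossCorr _ _) ρ = _
      rw [gft_crossCorr hmul hone hunitary _ (w (n+1)), ih, hatProd, mul_assoc]

/-- for a complete set of unitary irreps (completeness expressed by the
Plancherel formula, as in the context), `⟨x ⋆ w₁ ⋆ ⋯ ⋆ w_{L−1}, w_L⟩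
= (1/|G|) ∑_ρ d_ρ Tr[x̂(ρ) ŵ₁(ρ)† ⋯ ŵ_L(ρ)†]` for real-valued `x, w₁, …, w_L`. -/
theorem inner_iterCorr_eq_fourier_trace {G : Type*} [Group G] [Fintype G]
    {ι : Type*} [Fintype ι] (dm : ι → ℕ)
    (ρ : ∀ i, G → Matrix (Fin (dm i)) (Fin (dm i)) ℂ)
    (hmul : ∀ i, ∀ a b : G, ρ i (a * b) = ρ i a * ρ i b)
    (hone : ∀ i, ρ i 1 = 1)
    (hunitary : ∀ i, ∀ u : G, ρ i u * (ρ i u)ᴴ = 1)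
    -- completeness of the family of irreps: Plancherel formula
    (hPlancherel : ∀ f g : G → ℂ,
      ∑ u : G, f u * (starRingEnd ℂ) (g u) =
        (1 / (Fintype.card G : ℂ)) *
          ∑ i, (dm i : ℂ) * Matrix.trace (gft f (ρ i) * (gft g (ρ i))ᴴ))
    (L : ℕ) (hL : 1 ≤ L) (x : G → ℝ) (w : ℕ → G → ℝ) :
    ∑ u : G, iterCorr (fun a => (x a : ℂ)) (fun n a => (w n a : ℂ)) (L - 1) u * (w L u : ℂ) =
      (1 / (Fintype.card G : ℂ)) *
        ∑ i, (dm i : ℂ) *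
          Matrix.trace (gft (fun a => (x a : ℂ)) (ρ i) *
            hatProd (ρ i) (fun n a => (w n a : ℂ)) L) := by
  obtain ⟨m, rfl⟩ : ∃ m, L = m + 1 := ⟨L - 1, (Nat.succ_pred_eq_of_pos hL).symm⟩
  have key := hPlancherel
    (iterCorr (fun a => (x a : ℂ)) (fun n a => (w n a : ℂ)) m)
    (fun a => (w (m + 1) a : ℂ))
  simp only [Complex.conj_ofReal] at key
  simp only [Nat.add_sub_cancel]
  rw [key]
  congr 1
  refine Finset.sum_congr rfl fun i _ => ?_
  rw [gft_iterCorr (hmul i) (hone i) (hunitary i) x w m]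
  rw [show hatProd (ρ i) (fun n a => (w n a : ℂ)) (m + 1)
      = hatProd (ρ i) (fun n a => (w n a : ℂ)) m * (gft (fun a => (w (m+1) a : ℂ)) (ρ i))ᴴ
      from rfl, mul_assoc]
end

section
/- Let G be a finite group, f : G → ℂ a nonzero function, Ĝ a complete set of unitary irreducible representations of G. Then |supp(f)| · ∑_{ρ ∈ Ĝ} d_ρ · rank(f̂(ρ)) ≥ |G| (Meshulam's uncertainty principle). -/
open Matrix BigOperators
open scoped Classical

/-- The equivalence between a pi submodule and the product of submodules. -/
def piSubmoduleEquiv {ι R : Type*} [Semiring R] {M : ι → Type*} [∀ i, AddCommMonoid (M i)]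
    [∀ i, Module R (M i)] (p : ∀ i, Submodule R (M i)) :
    (Submodule.pi Set.univ p) ≃ₗ[R] (∀ i, p i) where
  toFun x := fun i => ⟨x.1 i, x.2 i (Set.mem_univ i)⟩
  map_add' _ _ := rfl
  map_smul' _ _ := rfl
  invFun v := ⟨fun i => v i, fun i _ => (v i).2⟩
  left_inv _ := rfl
  right_inv _ := rfl

lemma finrank_pi_submodule {ι : Type*} [Fintype ι] {M : ι → Type*} [∀ i, AddCommGroup (M i)]
    [∀ i, Module ℂ (M i)] [∀ i, FiniteDimensional ℂ (M i)] (p : ∀ i, Submodule ℂ (M i)) :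
    Module.finrank ℂ (Submodule.pi Set.univ p) = ∑ i, Module.finrank ℂ (p i) := by
  rw [(piSubmoduleEquiv p).finrank_eq, Module.finrank_pi_fintype]

/-- gft as a linear map in `f`. -/
noncomputable def gftL {G : Type*} [Group G] [Fintype G] {d : ℕ}
    (ρ : G → Matrix (Fin d) (Fin d) ℂ) : (G → ℂ) →ₗ[ℂ] Matrix (Fin d) (Fin d) ℂ where
  toFun f := gft f ρ
  map_add' f g := by simp [gft, add_smul, Finset.sum_add_distrib]
  map_smul' c f := by simp [gft, smul_smul, Finset.smul_sum]

/-- The submodule of square matrices whose columns lie in the column space of `A`. -/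
noncomputable def colSub {d : ℕ} (A : Matrix (Fin d) (Fin d) ℂ) :
    Submodule ℂ (Matrix (Fin d) (Fin d) ℂ) :=
  (Submodule.pi Set.univ (fun _ : Fin d => LinearMap.range A.mulVecLin)).map
    (Matrix.transposeLinearEquiv (Fin d) (Fin d) ℂ ℂ).symm.toLinearMap

lemma finrank_colSub {d : ℕ} (A : Matrix (Fin d) (Fin d) ℂ) :
    Module.finrank ℂ (colSub A) = d * A.rank := by
  rw [colSub]
  erw [LinearEquiv.finrank_map_eq]
  erw [finrank_pi_submodule]
  simp [Matrix.rank]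

lemma mul_mem_colSub {d : ℕ} (A B : Matrix (Fin d) (Fin d) ℂ) : A * B ∈ colSub A := by
  rw [colSub]
  erw [Submodule.mem_map_equiv]
  rw [LinearEquiv.symm_symm]
  intro j _
  refine ⟨fun k => B k j, ?_⟩
  show A.mulVecLin (fun k => B k j) = (A * B)ᵀ j
  ext r
  simp [Matrix.mulVec, Matrix.mul_apply, dotProduct]

/-- Meshulam's uncertainty principle: for a nonzero `f : G → ℂ` and a
complete set of unitary irreducible representations (completeness expressed by the
Plancherel formula), `|supp(f)| · ∑_ρ d_ρ · rank(f̂(ρ)) ≥ |G|`. -/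
theorem meshulam_uncertainty {G : Type*} [Group G] [Fintype G]
    {ι : Type*} [Fintype ι] (dm : ι → ℕ)
    (ρ : ∀ i, G → Matrix (Fin (dm i)) (Fin (dm i)) ℂ)
    (hmul : ∀ i, ∀ a b : G, ρ i (a * b) = ρ i a * ρ i b)
    (hone : ∀ i, ρ i 1 = 1)
    (hunitary : ∀ i, ∀ u : G, ρ i u * (ρ i u)ᴴ = 1)
    (hPlancherel : ∀ f g : G → ℂ,
      ∑ u : G, f u * (starRingEnd ℂ) (g u) =
        (1 / (Fintype.card G : ℂ)) *
          ∑ i, (dm i : ℂ) * Matrix.trace (gft f (ρ i) * (gft g (ρ i))ᴴ))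
    (f : G → ℂ) (hf : f ≠ 0) :
    Fintype.card G ≤
      (Finset.univ.filter (fun u : G => f u ≠ 0)).card *
        ∑ i, dm i * (gft f (ρ i)).rank := by
  classical
  set s := (Finset.univ.filter (fun u : G => f u ≠ 0)).card with hs
  -- the translates of f
  set T : G → (G → ℂ) := fun x y => f (y * x) with hT
  -- Fourier transform of a translate
  have hgftT : ∀ i, ∀ x : G, gft (T x) (ρ i) = gft f (ρ i) * ρ i x⁻¹ := by
    intro i x
    have h1 : ∑ u : G, T x u • ρ i u = ∑ v : G, f v • ρ i (v * x⁻¹) := by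
      refine Fintype.sum_equiv (Equiv.mulRight x) _ _ (fun v => ?_)
      simp [hT, mul_assoc]
    rw [gft, h1]
    simp_rw [hmul i _ x⁻¹, ← smul_mul_assoc, ← Finset.sum_mul]
    rfl
  -- the support of each translate has cardinality s
  have hsuppT : ∀ x : G, (Finset.univ.filter (fun z : G => T x z ≠ 0)).card = s := by
    intro x
    rw [hs]
    apply Finset.card_bij (fun y _ => y * x)
    · intro y hy
      simp only [Finset.mem_filter, Finset.mem_univ, true_and] at hy ⊢
      simpa [hT] using hy
    · intro a _ b _ hab
      exact mul_right_cancel hab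
    · intro u hu
      refine ⟨u * x⁻¹, ?_, by group⟩
      simp only [Finset.mem_filter, Finset.mem_univ, true_and] at hu ⊢
      simpa [hT, mul_assoc] using hu
  -- the Fourier linear map
  set Φ : (G → ℂ) →ₗ[ℂ] (∀ i, Matrix (Fin (dm i)) (Fin (dm i)) ℂ) :=
    LinearMap.pi (fun i => gftL (ρ i)) with hΦ
  have hΦapp : ∀ g : G → ℂ, ∀ i, Φ g i = gft g (ρ i) := fun g i => rfl
  -- Φ is injective
  have hΦinj : Function.Injective Φ := by
    rw [injective_iff_map_eq_zero]
    intro g hg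
    have hP := hPlancherel g g
    have hz : ∀ i, gft g (ρ i) = 0 := by
      intro i
      have := congrFun hg i
      simpa [hΦapp] using this
    simp only [hz, Matrix.zero_mul, Matrix.trace_zero, Matrix.conjTranspose_zero,
      mul_zero, Finset.sum_const_zero] at hP
    have hre : ∑ u : G, Complex.normSq (g u) = 0 := by
      have : ((∑ u : G, Complex.normSq (g u) : ℝ) : ℂ) = 0 := by
        push_cast
        simpa [Complex.mul_conj] using hP
      exact_mod_cast this
    funext u
    have := (Finset.sum_eq_zero_iff_of_nonneg (fun u _ => Complex.normSq_nonneg (g u))).mp hre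
      u (Finset.mem_univ u)
    exact Complex.normSq_eq_zero.mp this
  -- the target submodule
  set V : Submodule ℂ (∀ i, Matrix (Fin (dm i)) (Fin (dm i)) ℂ) :=
    Submodule.pi Set.univ (fun i => colSub (gft f (ρ i))) with hV
  have hfinV : Module.finrank ℂ V = ∑ i, dm i * (gft f (ρ i)).rank := by
    rw [hV, finrank_pi_submodule]
    exact Finset.sum_congr rfl (fun i _ => finrank_colSub _)
  have hΦT : ∀ x : G, Φ (T x) ∈ V := by
    intro x i _
    rw [hΦapp, hgftT]
    exact mul_mem_colSub _ _
  -- extract a linearly independent spanning subset of the translates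
  obtain ⟨b, hbsub, hbspan, hbind⟩ := exists_linearIndependent ℂ (Set.range T)
  have hbfin : b.Finite := (Set.finite_range T).subset hbsub
  haveI : Fintype b := hbfin.fintype
  -- every point is in the support of some element of b
  obtain ⟨u0, hu0⟩ : ∃ u, f u ≠ 0 := Function.ne_iff.mp hf
  have hcover : ∀ z : G, ∃ g ∈ b, g z ≠ 0 := by
    intro z
    by_contra hcon
    push_neg at hcon
    have hble : Submodule.span ℂ b ≤ LinearMap.ker (LinearMap.proj z (R := ℂ) (φ := fun _ : G => ℂ)) := by
      rw [Submodule.span_le]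
      intro g hg
      simpa using hcon g hg
    have hmem : T (z⁻¹ * u0) ∈ Submodule.span ℂ b := by
      rw [hbspan]
      exact Submodule.subset_span ⟨z⁻¹ * u0, rfl⟩
    have := hble hmem
    simp only [LinearMap.mem_ker, LinearMap.proj_apply] at this
    rw [hT] at this
    simp only [← mul_assoc, mul_inv_cancel, one_mul] at this
    exact hu0 this
  -- counting: |G| ≤ |b| * s
  have hcount : Fintype.card G ≤ hbfin.toFinset.card * s := by
    have hsub : Finset.univ ⊆ hbfin.toFinset.biUnion
        (fun g => Finset.univ.filter (fun z : G => g z ≠ 0)) := by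
      intro z _
      obtain ⟨g, hg, hgz⟩ := hcover z
      exact Finset.mem_biUnion.mpr ⟨g, hbfin.mem_toFinset.mpr hg, by simp [hgz]⟩
    calc Fintype.card G ≤ (hbfin.toFinset.biUnion
          (fun g => Finset.univ.filter (fun z : G => g z ≠ 0))).card := by
          rw [← Finset.card_univ]; exact Finset.card_le_card hsub
      _ ≤ ∑ g ∈ hbfin.toFinset, (Finset.univ.filter (fun z : G => g z ≠ 0)).card :=
          Finset.card_biUnion_le
      _ ≤ ∑ _g ∈ hbfin.toFinset, s := by
          refine Finset.sum_le_sum (fun g hg => ?_)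
          obtain ⟨x, rfl⟩ := hbsub (hbfin.mem_toFinset.mp hg)
          exact le_of_eq (hsuppT x)
      _ = hbfin.toFinset.card * s := by rw [Finset.sum_const, smul_eq_mul]
  -- |b| ≤ finrank V
  have hbcard : hbfin.toFinset.card ≤ ∑ i, dm i * (gft f (ρ i)).rank := by
    rw [← hfinV]
    have hind2 : LinearIndependent ℂ (Φ ∘ ((↑) : b → (G → ℂ))) :=
      hbind.map' Φ (LinearMap.ker_eq_bot.mpr hΦinj)
    have hmem : ∀ g : b, Φ g ∈ V := by
      rintro ⟨g, hg⟩
      obtain ⟨x, rfl⟩ := hbsub hg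
      exact hΦT x
    have hind3 : LinearIndependent ℂ (fun g : b => (⟨Φ g, hmem g⟩ : V)) := by
      apply LinearIndependent.of_comp V.subtype
      exact hind2
    have := hind3.fintype_card_le_finrank
    rwa [hbfin.card_toFinset]
  calc Fintype.card G ≤ hbfin.toFinset.card * s := hcount
    _ ≤ (∑ i, dm i * (gft f (ρ i)).rank) * s := Nat.mul_le_mul_right s hbcard
    _ = s * ∑ i, dm i * (gft f (ρ i)).rank := Nat.mul_comm _ _
end

section
/- Let G be a finite abelian group, f : G → ℂ nonzero, and let f̂ denote its Fourier transform with respect to the characters of G. Then (‖f‖₁/‖f‖_∞) · (‖f̂‖₁/‖f̂‖_∞) ≥ |G|, where norms are the ℓ¹ and ℓ^∞ norms over G and over the dual group respectively. -/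
open BigOperators
open scoped Classical

/-- generalized Donoho–Stark uncertainty principle: for a finite abelian
group `G`, a complete family of unitary characters (completeness expressed by the
Plancherel formula), and nonzero `f : G → ℂ`,
`(‖f‖₁/‖f‖_∞) · (‖f̂‖₁/‖f̂‖_∞) ≥ |G|`. -/
theorem donoho_stark_norm {G : Type*} [CommGroup G] [Fintype G]
    {ι : Type*} [Fintype ι] (χ : ι → (G →* ℂ))
    (hunit : ∀ i, ∀ u : G, χ i u * (starRingEnd ℂ) (χ i u) = 1)
    (hPlancherel : ∀ f g : G → ℂ,
      ∑ u : G, f u * (starRingEnd ℂ) (g u) =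
        (1 / (Fintype.card G : ℂ)) *
          ∑ i, (∑ u : G, f u * χ i u) * (starRingEnd ℂ) (∑ u : G, g u * χ i u))
    (f : G → ℂ) (hf : f ≠ 0) :
    (Fintype.card G : ℝ) ≤
      ((∑ u : G, ‖f u‖) / (⨆ u : G, ‖f u‖)) *
        ((∑ i, ‖∑ u : G, f u * χ i u‖) /
          (⨆ i, ‖∑ u : G, f u * χ i u‖)) := by
  have hN : 0 < ((Fintype.card G : ℝ)) := by exact_mod_cast Fintype.card_pos
  set F : ι → ℂ := fun i => ∑ u : G, f u * χ i u with hFdef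
  have habsχ : ∀ i u, ‖χ i u‖ = 1 := by
    intro i u
    have h := hunit i u
    rw [Complex.mul_conj] at h
    have h2 : Complex.normSq (χ i u) = 1 := by exact_mod_cast h
    rw [Complex.norm_def, h2, Real.sqrt_one]
  -- inversion
  have hinv : ∀ u : G, f u = (1 / (Fintype.card G : ℂ)) * ∑ i, F i * (starRingEnd ℂ) (χ i u) := by
    intro u
    have h := hPlancherel f (fun v => if v = u then 1 else 0)
    simp only [apply_ite (starRingEnd ℂ), map_one, map_zero, mul_ite, mul_one, mul_zero,
      ite_mul, one_mul, zero_mul, Finset.sum_ite_eq', Finset.mem_univ, if_true] at h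
    exact h
  -- f̂ is not identically zero
  have hFne : ∃ i, F i ≠ 0 := by
    by_contra hc
    push_neg at hc
    apply hf
    funext u
    rw [hinv u]
    simp [hc]
  obtain ⟨i₀, hi₀⟩ := hFne
  have : Nonempty ι := ⟨i₀⟩
  obtain ⟨u₀, hu₀⟩ : ∃ u, f u ≠ 0 := Function.ne_iff.mp hf
  set A := ∑ u : G, ‖f u‖ with hA
  set B := ∑ i, ‖F i‖ with hB
  set M := ⨆ u : G, ‖f u‖ with hM
  set S := ⨆ i, ‖F i‖ with hS
  have hbddG : BddAbove (Set.range fun u : G => ‖f u‖) :=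
    (Set.finite_range _).bddAbove
  have hbddι : BddAbove (Set.range fun i : ι => ‖F i‖) :=
    (Set.finite_range _).bddAbove
  have hMpos : 0 < M :=
    lt_of_lt_of_le (by simpa using hu₀) (le_ciSup hbddG u₀)
  have hSpos : 0 < S :=
    lt_of_lt_of_le (by simpa using hi₀) (le_ciSup hbddι i₀)
  have h1 : ∀ u, ‖f u‖ ≤ B / (Fintype.card G : ℝ) := by
    intro u
    rw [hinv u, norm_mul]
    have habs1 : ‖1 / (Fintype.card G : ℂ)‖ = 1 / (Fintype.card G : ℝ) := by
      rw [norm_div, norm_one, Complex.norm_natCast]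
    rw [habs1, div_mul_eq_mul_div, one_mul, div_le_div_iff_of_pos_right hN]
    calc ‖∑ i, F i * (starRingEnd ℂ) (χ i u)‖
        ≤ ∑ i, ‖F i * (starRingEnd ℂ) (χ i u)‖ :=
          norm_sum_le _ _
      _ = B := by
          rw [hB]
          refine Finset.sum_congr rfl fun i _ => ?_
          rw [norm_mul, Complex.norm_conj, habsχ, mul_one]
  have h2 : ∀ i, ‖F i‖ ≤ A := by
    intro i
    calc ‖F i‖ ≤ ∑ u, ‖f u * χ i u‖ :=
          norm_sum_le _ _
      _ = A := by
          rw [hA]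
          refine Finset.sum_congr rfl fun u _ => ?_
          rw [norm_mul, habsχ, mul_one]
  have hMB : M ≤ B / (Fintype.card G : ℝ) := ciSup_le h1
  have hSA : S ≤ A := ciSup_le h2
  have hNM : (Fintype.card G : ℝ) * M ≤ B := by
    rw [mul_comm]
    exact (le_div_iff₀ hN).mp hMB
  have hBnn : 0 ≤ B := Finset.sum_nonneg fun i _ => norm_nonneg _
  rw [div_mul_div_comm, le_div_iff₀ (mul_pos hMpos hSpos)]
  nlinarith [mul_le_mul_of_nonneg_right hNM hSpos.le, mul_le_mul_of_nonneg_left hSA hBnn]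
end

section
/- Let G be a finite abelian group and f : G → ℂ a nonzero function. Then |supp(f)| · |supp(f̂)| ≥ |G|, where supp(f̂) is the set of characters χ with f̂(χ) ≠ 0 (Donoho–Stark uncertainty principle for finite abelian groups). -/
open BigOperators
open scoped Classical

/-- Donoho–Stark uncertainty principle for finite abelian groups: for a
finite abelian group `G`, a complete family of unitary characters (completeness
expressed by the Plancherel formula), and nonzero `f : G → ℂ`,
`|supp(f)| · |supp(f̂)| ≥ |G|`. -/
theorem donoho_stark_support {G : Type*} [CommGroup G] [Fintype G]
    {ι : Type*} [Fintype ι] (χ : ι → (G →* ℂ))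
    (hunit : ∀ i, ∀ u : G, χ i u * (starRingEnd ℂ) (χ i u) = 1)
    (hPlancherel : ∀ f g : G → ℂ,
      ∑ u : G, f u * (starRingEnd ℂ) (g u) =
        (1 / (Fintype.card G : ℂ)) *
          ∑ i, (∑ u : G, f u * χ i u) * (starRingEnd ℂ) (∑ u : G, g u * χ i u))
    (f : G → ℂ) (hf : f ≠ 0) :
    Fintype.card G ≤
      (Finset.univ.filter (fun u : G => f u ≠ 0)).card *
        (Finset.univ.filter (fun i : ι => (∑ u : G, f u * χ i u) ≠ 0)).card := by
  classical
  set A := Finset.univ.filter (fun u : G => f u ≠ 0) with hA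
  set B := Finset.univ.filter (fun i : ι => (∑ u : G, f u * χ i u) ≠ 0) with hB
  set S : ℝ := ∑ u : G, Complex.normSq (f u) with hS
  have hSpos : 0 < S := by
    obtain ⟨u, hu⟩ : ∃ u, f u ≠ 0 := by
      by_contra h; push_neg at h; exact hf (funext h)
    refine Finset.sum_pos' (fun v _ => Complex.normSq_nonneg _) ⟨u, Finset.mem_univ _, ?_⟩
    exact Complex.normSq_pos.mpr hu
  have habsχ : ∀ i u, ‖χ i u‖ = 1 := by
    intro i u
    have := hunit i u
    rw [Complex.mul_conj] at this
    have : Complex.normSq (χ i u) = 1 := by exact_mod_cast this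
    rw [← Complex.sq_norm] at this
    nlinarith [norm_nonneg (χ i u)]
  -- Plancherel
  have key : (Fintype.card G : ℝ) * S =
      ∑ i, Complex.normSq (∑ u : G, f u * χ i u) := by
    have h := hPlancherel f f
    simp only [Complex.mul_conj] at h
    have hNne : (Fintype.card G : ℂ) ≠ 0 := by
      exact_mod_cast Nat.cast_ne_zero.mpr Fintype.card_ne_zero
    rw [one_div] at h
    have h2 : (Fintype.card G : ℂ) * ∑ u : G, (Complex.normSq (f u) : ℂ) =
        ∑ i, (Complex.normSq (∑ u : G, f u * χ i u) : ℂ) := by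
      rw [h, ← mul_assoc, mul_inv_cancel₀ hNne, one_mul]
    have := h2
    push_cast at this
    exact_mod_cast this
  -- Cauchy–Schwarz bound per character
  have hbound : ∀ i, Complex.normSq (∑ u : G, f u * χ i u) ≤ A.card * S := by
    intro i
    have h1 : ‖∑ u : G, f u * χ i u‖ ≤ ∑ u ∈ A, ‖f u‖ := by
      have : ∑ u : G, f u * χ i u = ∑ u ∈ A, f u * χ i u := by
        rw [hA]
        refine (Finset.sum_filter_of_ne ?_).symm
        intro u _ h
        intro hfu; exact h (by rw [hfu, zero_mul])
      rw [this]
      refine (norm_sum_le _ _).trans_eq ?_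
      refine Finset.sum_congr rfl fun u _ => ?_
      rw [norm_mul, habsχ, mul_one]
    have h2 : (∑ u ∈ A, ‖f u‖) ^ 2 ≤ A.card * ∑ u ∈ A, ‖f u‖ ^ 2 :=
      sq_sum_le_card_mul_sum_sq
    have h3 : ∑ u ∈ A, ‖f u‖ ^ 2 ≤ S := by
      rw [hS]
      have : ∑ u ∈ A, ‖f u‖ ^ 2 = ∑ u ∈ A, Complex.normSq (f u) :=
        Finset.sum_congr rfl fun u _ => Complex.sq_norm _
      rw [this]
      exact Finset.sum_le_sum_of_subset_of_nonneg (Finset.subset_univ _)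
        (fun u _ _ => Complex.normSq_nonneg _)
    calc Complex.normSq (∑ u : G, f u * χ i u)
        = ‖∑ u : G, f u * χ i u‖ ^ 2 := (Complex.sq_norm _).symm
      _ ≤ (∑ u ∈ A, ‖f u‖) ^ 2 := by
          exact pow_le_pow_left₀ (norm_nonneg _) h1 2
      _ ≤ A.card * ∑ u ∈ A, ‖f u‖ ^ 2 := h2
      _ ≤ A.card * S := by
          exact mul_le_mul_of_nonneg_left h3 (Nat.cast_nonneg _)
  have hsumB : ∑ i, Complex.normSq (∑ u : G, f u * χ i u) ≤ B.card * (A.card * S) := by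
    have : ∑ i, Complex.normSq (∑ u : G, f u * χ i u)
        = ∑ i ∈ B, Complex.normSq (∑ u : G, f u * χ i u) := by
      rw [hB]
      refine (Finset.sum_filter_of_ne ?_).symm
      intro i _ h hzero
      exact h (by rw [hzero, map_zero])
    rw [this]
    calc ∑ i ∈ B, Complex.normSq (∑ u : G, f u * χ i u)
        ≤ ∑ i ∈ B, (A.card * S) := Finset.sum_le_sum fun i _ => hbound i
      _ = B.card * (A.card * S) := by rw [Finset.sum_const, nsmul_eq_mul]
  have : (Fintype.card G : ℝ) * S ≤ (A.card * B.card) * S := by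
    rw [key]; refine hsumB.trans_eq ?_; ring
  have hfin : (Fintype.card G : ℝ) ≤ (A.card * B.card : ℝ) :=
    le_of_mul_le_mul_right this hSpos
  exact_mod_cast hfin
end

section
/- For an n×n complex matrix A, the Clarke subdifferential of the nuclear norm (1-Schatten norm) at A equals { G : ‖A‖₁^{(S)} = Tr(G†A) and ‖G‖_∞^{(S)} ≤ 1 }, where ‖·‖_∞^{(S)} is the spectral norm. -/
open Matrix BigOperators

/-- The `p`-Schatten norm: the `ℓᵖ` norm of the singular values. -/
noncomputable def schatten {n : ℕ} (p : ℝ) (A : Matrix (Fin n) (Fin n) ℂ) : ℝ :=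
  (∑ i, Real.sqrt ((Matrix.isHermitian_conjTranspose_mul_self A).eigenvalues i) ^ p) ^ (1 / p)

/-- The spectral norm (`∞`-Schatten norm): the largest singular value. -/
noncomputable def matSpectralNorm {n : ℕ} (A : Matrix (Fin n) (Fin n) ℂ) : ℝ :=
  ⨆ i, Real.sqrt ((Matrix.isHermitian_conjTranspose_mul_self A).eigenvalues i)



namespace SubdiffAux

variable {n : ℕ}

/-- Euclidean norm of a complex vector. -/
noncomputable def en (x : Fin n → ℂ) : ℝ := Real.sqrt (∑ i, Complex.normSq (x i))

lemma en_nonneg (x : Fin n → ℂ) : 0 ≤ en x := Real.sqrt_nonneg _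

lemma sum_normSq_nonneg (x : Fin n → ℂ) : 0 ≤ ∑ i, Complex.normSq (x i) :=
  Finset.sum_nonneg fun i _ => Complex.normSq_nonneg _

lemma en_sq (x : Fin n → ℂ) : en x ^ 2 = ∑ i, Complex.normSq (x i) :=
  Real.sq_sqrt (sum_normSq_nonneg x)

lemma dot_self_eq (x : Fin n → ℂ) :
    star x ⬝ᵥ x = ((∑ i, Complex.normSq (x i) : ℝ) : ℂ) := by
  push_cast
  simp only [dotProduct, Pi.star_apply, RCLike.star_def]
  exact Finset.sum_congr rfl fun i _ => (Complex.normSq_eq_conj_mul_self).symm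

lemma en_smul_real (t : ℝ) (x : Fin n → ℂ) : en ((t : ℂ) • x) = |t| * en x := by
  simp only [en, Pi.smul_apply, smul_eq_mul, Complex.normSq_mul, Complex.normSq_ofReal,
    ← Finset.mul_sum]
  rw [Real.sqrt_mul (mul_self_nonneg t), Real.sqrt_mul_self_eq_abs]

lemma en_star (x : Fin n → ℂ) : en (star x) = en x := by
  simp [en, Complex.normSq_conj]

/-- Cauchy–Schwarz. -/
lemma cs (a b : Fin n → ℂ) : ‖star a ⬝ᵥ b‖ ≤ en a * en b := by
  have h := norm_inner_le_norm (𝕜 := ℂ) (WithLp.toLp 2 a) (WithLp.toLp 2 b)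
  rw [EuclideanSpace.inner_toLp_toLp, dotProduct_comm] at h
  have hn : ∀ c : Fin n → ℂ, ‖WithLp.toLp 2 c‖ = en c := by
    intro c
    rw [EuclideanSpace.norm_eq]
    congr 1
    exact Finset.sum_congr rfl fun i _ => by
      rw [← Complex.sq_norm]
  rwa [hn, hn] at h

end SubdiffAux


namespace SubdiffAuxB

variable {n : ℕ}

lemma trace_eq {H : Matrix (Fin n) (Fin n) ℂ} (hH : H.IsHermitian)
    (M : Matrix (Fin n) (Fin n) ℂ) :
    Matrix.trace M = ∑ i, star (⇑(hH.eigenvectorBasis i)) ⬝ᵥ (M *ᵥ ⇑(hH.eigenvectorBasis i)) := by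
  set U := (Matrix.IsHermitian.eigenvectorUnitary hH : Matrix (Fin n) (Fin n) ℂ) with hU
  have h1 : U * star U = 1 := (Matrix.mem_unitaryGroup_iff).mp (Matrix.IsHermitian.eigenvectorUnitary hH).2
  have h2 : Matrix.trace M = Matrix.trace (star U * (M * U)) := by
    rw [trace_mul_comm, mul_assoc, h1, mul_one]
  rw [h2]
  simp only [Matrix.trace, Matrix.diag, Matrix.mul_apply, Matrix.mulVec, dotProduct,
    Matrix.star_apply, Pi.star_apply, hU, Matrix.IsHermitian.eigenvectorUnitary_apply]

lemma unit_col {H : Matrix (Fin n) (Fin n) ℂ} (hH : H.IsHermitian) (i : Fin n) :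
    star (⇑(hH.eigenvectorBasis i)) ⬝ᵥ ⇑(hH.eigenvectorBasis i) = 1 := by
  have h := hH.eigenvectorBasis.orthonormal.1 i
  have h2 : (inner ℂ (hH.eigenvectorBasis i) (hH.eigenvectorBasis i) : ℂ) = 1 := by
    rw [inner_self_eq_norm_sq_to_K, h]; norm_num
  rw [EuclideanSpace.inner_eq_star_dotProduct, dotProduct_comm] at h2
  exact h2

lemma mulvec_col {H : Matrix (Fin n) (Fin n) ℂ} (hH : H.IsHermitian) (i : Fin n) :
    H *ᵥ ⇑(hH.eigenvectorBasis i) = (hH.eigenvalues i : ℂ) • ⇑(hH.eigenvectorBasis i) := by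
  rw [hH.mulVec_eigenvectorBasis]
  ext j
  simp [Complex.real_smul]

end SubdiffAuxB
namespace SubdiffAuxC

variable {n : ℕ}

lemma schatten_one (B : Matrix (Fin n) (Fin n) ℂ) :
    schatten 1 B = ∑ i, Real.sqrt ((Matrix.isHermitian_conjTranspose_mul_self B).eigenvalues i) := by
  simp [schatten, Real.rpow_one]

lemma schatten_one_nonneg (B : Matrix (Fin n) (Fin n) ℂ) : 0 ≤ schatten 1 B := by
  rw [schatten_one]
  exact Finset.sum_nonneg fun i _ => Real.sqrt_nonneg _

lemma eig_nonneg (B : Matrix (Fin n) (Fin n) ℂ) (i : Fin n) :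
    0 ≤ (Matrix.isHermitian_conjTranspose_mul_self B).eigenvalues i :=
  Matrix.eigenvalues_conjTranspose_mul_self_nonneg B i

lemma spectralNorm_nonneg (G : Matrix (Fin n) (Fin n) ℂ) : 0 ≤ matSpectralNorm G :=
  Real.iSup_nonneg fun i => Real.sqrt_nonneg _

lemma sqrt_eig_le (G : Matrix (Fin n) (Fin n) ℂ) (i : Fin n) :
    Real.sqrt ((Matrix.isHermitian_conjTranspose_mul_self G).eigenvalues i) ≤ matSpectralNorm G :=
  le_ciSup (f := fun i => Real.sqrt ((Matrix.isHermitian_conjTranspose_mul_self G).eigenvalues i))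
    (Set.Finite.bddAbove (Set.finite_range _)) i

lemma eig_le_sq (G : Matrix (Fin n) (Fin n) ℂ) (i : Fin n) :
    (Matrix.isHermitian_conjTranspose_mul_self G).eigenvalues i ≤ matSpectralNorm G ^ 2 := by
  have h := sqrt_eig_le G i
  have h2 := Real.sq_sqrt (eig_nonneg G i)
  nlinarith [Real.sqrt_nonneg ((Matrix.isHermitian_conjTranspose_mul_self G).eigenvalues i)]

/-- The quadratic-form bound `xᴴ (GᴴG) x ≤ ‖G‖² ‖x‖²`. -/
lemma quad_le (G : Matrix (Fin n) (Fin n) ℂ) (x : Fin n → ℂ) :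
    (star x ⬝ᵥ ((Gᴴ * G) *ᵥ x)).re ≤ matSpectralNorm G ^ 2 * ∑ i, Complex.normSq (x i) := by
  set hH := Matrix.isHermitian_conjTranspose_mul_self G with hHdef
  set U := (Matrix.IsHermitian.eigenvectorUnitary hH : Matrix (Fin n) (Fin n) ℂ) with hU
  have h1 : U * star U = 1 := (Matrix.mem_unitaryGroup_iff).mp (Matrix.IsHermitian.eigenvectorUnitary hH).2
  set w := star U *ᵥ x with hw
  have hsw : star w = star x ᵥ* U := by
    rw [hw, Matrix.star_mulVec, Matrix.star_eq_conjTranspose, Matrix.conjTranspose_conjTranspose]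
  have key1 : (Gᴴ * G) *ᵥ x = U *ᵥ ((Matrix.diagonal (RCLike.ofReal ∘ hH.eigenvalues)) *ᵥ w) := by
    conv_lhs => rw [hH.spectral_theorem, Unitary.conjStarAlgAut_apply]
    rw [hw, ← Matrix.mulVec_mulVec, ← Matrix.mulVec_mulVec]
  rw [key1, Matrix.dotProduct_mulVec, ← hsw]
  have key2 : star w ⬝ᵥ ((Matrix.diagonal (RCLike.ofReal ∘ hH.eigenvalues)) *ᵥ w)
      = ∑ i, ((hH.eigenvalues i : ℂ) * ((starRingEnd ℂ) (w i) * w i)) := by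
    simp only [dotProduct, Matrix.mulVec_diagonal, Pi.star_apply, Function.comp_apply,
      RCLike.star_def, RCLike.ofReal_alg, Complex.real_smul, Complex.ofReal_one, mul_one]
    exact Finset.sum_congr rfl fun i _ => by ring
  rw [key2]
  have key3 : ∀ i, ((hH.eigenvalues i : ℂ) * ((starRingEnd ℂ) (w i) * w i)).re
      = hH.eigenvalues i * Complex.normSq (w i) := by
    intro i
    rw [← Complex.normSq_eq_conj_mul_self, ← Complex.ofReal_mul]
    exact Complex.ofReal_re _
  rw [Complex.re_sum]
  simp only [key3]
  have hsum : ∑ i, Complex.normSq (w i) = ∑ i, Complex.normSq (x i) := by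
    have e1 : star w ⬝ᵥ w = star x ⬝ᵥ x := by
      rw [hsw, hw, ← Matrix.dotProduct_mulVec, Matrix.mulVec_mulVec, h1, Matrix.one_mulVec]
    have e2 := SubdiffAux.dot_self_eq w
    have e3 := SubdiffAux.dot_self_eq x
    rw [e2, e3] at e1
    exact_mod_cast e1
  calc ∑ i, hH.eigenvalues i * Complex.normSq (w i)
      ≤ ∑ i, matSpectralNorm G ^ 2 * Complex.normSq (w i) := by
        apply Finset.sum_le_sum
        intro i _
        exact mul_le_mul_of_nonneg_right (eig_le_sq G i) (Complex.normSq_nonneg _)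
    _ = matSpectralNorm G ^ 2 * ∑ i, Complex.normSq (w i) := by rw [Finset.mul_sum]
    _ = matSpectralNorm G ^ 2 * ∑ i, Complex.normSq (x i) := by rw [hsum]


lemma dot_self_mulVec (B : Matrix (Fin n) (Fin n) ℂ) (x : Fin n → ℂ) :
    star (B *ᵥ x) ⬝ᵥ (B *ᵥ x) = star x ⬝ᵥ ((Bᴴ * B) *ᵥ x) := by
  rw [Matrix.star_mulVec, ← Matrix.dotProduct_mulVec, Matrix.mulVec_mulVec]

lemma sum_normSq_mulVec_le (G : Matrix (Fin n) (Fin n) ℂ) (x : Fin n → ℂ) :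
    ∑ i, Complex.normSq ((G *ᵥ x) i) ≤ matSpectralNorm G ^ 2 * ∑ i, Complex.normSq (x i) := by
  have h1 : ((star (G *ᵥ x) ⬝ᵥ (G *ᵥ x)) : ℂ).re = ∑ i, Complex.normSq ((G *ᵥ x) i) := by
    rw [SubdiffAux.dot_self_eq]; exact Complex.ofReal_re _
  rw [← h1, dot_self_mulVec]
  exact quad_le G x

lemma en_mulVec_le (G : Matrix (Fin n) (Fin n) ℂ) (x : Fin n → ℂ) :
    SubdiffAux.en (G *ᵥ x) ≤ matSpectralNorm G * SubdiffAux.en x := by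
  have h := sum_normSq_mulVec_le G x
  have h2 : matSpectralNorm G * SubdiffAux.en x
      = Real.sqrt (matSpectralNorm G ^ 2 * ∑ i, Complex.normSq (x i)) := by
    rw [Real.sqrt_mul (sq_nonneg _), Real.sqrt_sq (spectralNorm_nonneg G)]
    rfl
  rw [h2]
  exact Real.sqrt_le_sqrt h

/-- singular value of column action: `‖B vᵢ‖ = √λᵢ`. -/
lemma en_mulVec_col (B : Matrix (Fin n) (Fin n) ℂ) (i : Fin n) :
    SubdiffAux.en (B *ᵥ ⇑((Matrix.isHermitian_conjTranspose_mul_self B).eigenvectorBasis i))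
      = Real.sqrt ((Matrix.isHermitian_conjTranspose_mul_self B).eigenvalues i) := by
  set hB := Matrix.isHermitian_conjTranspose_mul_self B
  set v := ⇑(hB.eigenvectorBasis i) with hv
  have h1 : star (B *ᵥ v) ⬝ᵥ (B *ᵥ v) = ((hB.eigenvalues i : ℝ) : ℂ) := by
    rw [dot_self_mulVec, SubdiffAuxB.mulvec_col hB i, dotProduct_smul, smul_eq_mul, ←
      hv, SubdiffAuxB.unit_col hB i, mul_one]
  rw [SubdiffAux.dot_self_eq] at h1
  have h2 : ∑ j, Complex.normSq ((B *ᵥ v) j) = hB.eigenvalues i := by exact_mod_cast h1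
  rw [SubdiffAux.en, h2]

/-- KEY: von Neumann-type trace inequality. -/
lemma key (G B : Matrix (Fin n) (Fin n) ℂ) :
    ‖Matrix.trace (Gᴴ * B)‖ ≤ matSpectralNorm G * schatten 1 B := by
  set hB := Matrix.isHermitian_conjTranspose_mul_self B
  rw [SubdiffAuxB.trace_eq hB (Gᴴ * B)]
  have step : ∀ i, star (⇑(hB.eigenvectorBasis i)) ⬝ᵥ ((Gᴴ * B) *ᵥ ⇑(hB.eigenvectorBasis i))
      = star (G *ᵥ ⇑(hB.eigenvectorBasis i)) ⬝ᵥ (B *ᵥ ⇑(hB.eigenvectorBasis i)) := by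
    intro i
    rw [Matrix.star_mulVec, ← Matrix.dotProduct_mulVec, Matrix.mulVec_mulVec]
  calc ‖∑ i, star (⇑(hB.eigenvectorBasis i)) ⬝ᵥ ((Gᴴ * B) *ᵥ ⇑(hB.eigenvectorBasis i))‖
      ≤ ∑ i, ‖star (⇑(hB.eigenvectorBasis i)) ⬝ᵥ ((Gᴴ * B) *ᵥ ⇑(hB.eigenvectorBasis i))‖ := by
        exact norm_sum_le _ _
    _ ≤ ∑ i, matSpectralNorm G * Real.sqrt (hB.eigenvalues i) := by
        apply Finset.sum_le_sum
        intro i _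
        rw [step i]
        calc ‖star (G *ᵥ ⇑(hB.eigenvectorBasis i)) ⬝ᵥ (B *ᵥ ⇑(hB.eigenvectorBasis i))‖
            ≤ SubdiffAux.en (G *ᵥ ⇑(hB.eigenvectorBasis i)) * SubdiffAux.en (B *ᵥ ⇑(hB.eigenvectorBasis i)) :=
              SubdiffAux.cs _ _
          _ ≤ (matSpectralNorm G * SubdiffAux.en ⇑(hB.eigenvectorBasis i)) * SubdiffAux.en (B *ᵥ ⇑(hB.eigenvectorBasis i)) := by
              apply mul_le_mul_of_nonneg_right (en_mulVec_le G _) (SubdiffAux.en_nonneg _)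
          _ = matSpectralNorm G * Real.sqrt (hB.eigenvalues i) := by
              rw [en_mulVec_col B i]
              have hunit : SubdiffAux.en ⇑(hB.eigenvectorBasis i) = 1 := by
                have h1 := SubdiffAuxB.unit_col hB i
                rw [SubdiffAux.dot_self_eq] at h1
                have h2 : ∑ j, Complex.normSq (⇑(hB.eigenvectorBasis i) j) = 1 := by exact_mod_cast h1
                rw [SubdiffAux.en, h2, Real.sqrt_one]
              rw [hunit, mul_one]
    _ = matSpectralNorm G * schatten 1 B := by
        rw [← Finset.mul_sum, schatten_one]

lemma trace_conjT_mul_vecMulVec (G : Matrix (Fin n) (Fin n) ℂ) (u b : Fin n → ℂ) :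
    Matrix.trace (Gᴴ * Matrix.vecMulVec u b) = star (G *ᵥ star b) ⬝ᵥ u := by
  simp only [Matrix.trace, Matrix.diag, Matrix.mul_apply, Matrix.vecMulVec_apply,
    Matrix.conjTranspose_apply, dotProduct, Matrix.mulVec, Pi.star_apply,
    RCLike.star_def, map_sum, _root_.map_mul, Complex.conj_conj]
  rw [Finset.sum_comm]
  exact Finset.sum_congr rfl fun k _ => by
    rw [Finset.sum_mul]
    exact Finset.sum_congr rfl fun i _ => by ring

lemma vecMulVec_mul_vecMulVec (a b c d : Fin n → ℂ) :
    Matrix.vecMulVec a b * Matrix.vecMulVec c d = (b ⬝ᵥ c) • Matrix.vecMulVec a d := by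
  ext i j
  simp only [Matrix.mul_apply, Matrix.vecMulVec_apply, Matrix.smul_apply, dotProduct,
    smul_eq_mul, Finset.sum_mul]
  exact Finset.sum_congr rfl fun k _ => by ring

lemma conjT_vecMulVec (u b : Fin n → ℂ) :
    (Matrix.vecMulVec u b)ᴴ = Matrix.vecMulVec (star b) (star u) := by
  ext i j
  simp [Matrix.vecMulVec_apply, Matrix.conjTranspose_apply, mul_comm]

lemma schatten_one_vecMulVec (u b : Fin n → ℂ) :
    schatten 1 (Matrix.vecMulVec u b) = SubdiffAux.en u * SubdiffAux.en b := by
  set B := Matrix.vecMulVec u b with hBdef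
  set hM := Matrix.isHermitian_conjTranspose_mul_self B
  set c : ℝ := ∑ k, Complex.normSq (u k) with hc
  set d : ℝ := ∑ k, Complex.normSq (b k) with hd
  have hc0 : 0 ≤ c := SubdiffAux.sum_normSq_nonneg u
  have hd0 : 0 ≤ d := SubdiffAux.sum_normSq_nonneg b
  have hsu : star u ⬝ᵥ u = (c : ℂ) := SubdiffAux.dot_self_eq u
  have hsb : b ⬝ᵥ star b = (d : ℂ) := by
    rw [dotProduct_comm]; exact SubdiffAux.dot_self_eq b
  -- Bᴴ * B = c • vecMulVec (star b) b
  have hMeq : Bᴴ * B = (c : ℂ) • Matrix.vecMulVec (star b) b := by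
    rw [hBdef, conjT_vecMulVec, vecMulVec_mul_vecMulVec, hsu]
  -- (Bᴴ B)² = (c*d) • (Bᴴ B)
  have hMM : (Bᴴ * B) * (Bᴴ * B) = ((c * d : ℝ) : ℂ) • (Bᴴ * B) := by
    rw [hMeq, smul_mul_assoc, mul_smul_comm, vecMulVec_mul_vecMulVec, hsb, smul_smul, smul_smul,
      smul_smul]
    push_cast
    ring_nf
  -- each eigenvalue satisfies λ² = (c*d) λ
  have heig : ∀ i, hM.eigenvalues i ^ 2 = (c * d) * hM.eigenvalues i := by
    intro i
    set v := ⇑(hM.eigenvectorBasis i) with hv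
    have hone : star v ⬝ᵥ v = 1 := SubdiffAuxB.unit_col hM i
    have hvne : v ≠ 0 := by
      intro h0
      rw [h0] at hone
      simp at hone
    have h1 : (Bᴴ * B) *ᵥ v = (hM.eigenvalues i : ℂ) • v := SubdiffAuxB.mulvec_col hM i
    have h2 : ((Bᴴ * B) * (Bᴴ * B)) *ᵥ v = ((hM.eigenvalues i ^ 2 : ℝ) : ℂ) • v := by
      rw [← Matrix.mulVec_mulVec, h1, Matrix.mulVec_smul, h1, smul_smul]
      push_cast
      ring_nf
    have h3 : ((Bᴴ * B) * (Bᴴ * B)) *ᵥ v = (((c * d) * hM.eigenvalues i : ℝ) : ℂ) • v := by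
      rw [hMM, Matrix.smul_mulVec, h1, smul_smul]
      push_cast
      ring_nf
    have h4 := h2.symm.trans h3
    have h5 : ((hM.eigenvalues i ^ 2 : ℝ) : ℂ) = (((c * d) * hM.eigenvalues i : ℝ) : ℂ) :=
      smul_left_injective ℂ hvne h4
    exact_mod_cast h5
  -- the sum of eigenvalues equals c * d
  have hsum : ∑ i, hM.eigenvalues i = c * d := by
    have t1 : Matrix.trace (Bᴴ * B) = ((∑ i, hM.eigenvalues i : ℝ) : ℂ) := by
      rw [SubdiffAuxB.trace_eq hM (Bᴴ * B)]
      push_cast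
      exact Finset.sum_congr rfl fun i _ => by
        rw [SubdiffAuxB.mulvec_col hM i, dotProduct_smul, SubdiffAuxB.unit_col hM i,
          smul_eq_mul, mul_one]
    have t2 : Matrix.trace (Bᴴ * B) = ((c * d : ℝ) : ℂ) := by
      rw [hMeq, Matrix.trace_smul, Matrix.trace]
      have : ∑ i, (Matrix.vecMulVec (star b) b).diag i = (d : ℂ) := by
        simp only [Matrix.diag, Matrix.vecMulVec_apply, Pi.star_apply, RCLike.star_def]
        rw [hd]
        push_cast
        exact Finset.sum_congr rfl fun i _ => (Complex.normSq_eq_conj_mul_self).symm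
      rw [this, smul_eq_mul]
      push_cast
      ring
    have := t1.symm.trans t2
    exact_mod_cast this
  -- conclude
  have hgoal : schatten 1 B = Real.sqrt (c * d) := by
    rw [SubdiffAuxC.schatten_one]
    rcases eq_or_ne (c * d) 0 with hcd | hcd
    · have hz : ∀ i, hM.eigenvalues i = 0 := by
        intro i
        have := heig i
        rw [hcd, zero_mul] at this
        exact pow_eq_zero_iff two_ne_zero |>.mp this
      rw [hcd, Real.sqrt_zero]
      exact Finset.sum_eq_zero fun i _ => by rw [hz i, Real.sqrt_zero]
    · have hcdpos : 0 < c * d := lt_of_le_of_ne (mul_nonneg hc0 hd0) (Ne.symm hcd)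
      have hsq : ∀ i, Real.sqrt (hM.eigenvalues i) = hM.eigenvalues i / Real.sqrt (c * d) := by
        intro i
        have h := heig i
        have : hM.eigenvalues i = 0 ∨ hM.eigenvalues i = c * d := by
          rcases eq_or_ne (hM.eigenvalues i) 0 with h0 | h0
          · exact Or.inl h0
          · right
            have h2 : hM.eigenvalues i * hM.eigenvalues i = c * d * hM.eigenvalues i := by
              have h3 := heig i
              rw [pow_two] at h3
              exact h3
            exact mul_right_cancel₀ h0 h2
        rcases this with h0 | h0
        · rw [h0, Real.sqrt_zero, zero_div]
        · rw [h0, Real.div_sqrt]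
      calc ∑ i, Real.sqrt (hM.eigenvalues i)
          = ∑ i, hM.eigenvalues i / Real.sqrt (c * d) := Finset.sum_congr rfl fun i _ => hsq i
        _ = (∑ i, hM.eigenvalues i) / Real.sqrt (c * d) := by rw [Finset.sum_div]
        _ = (c * d) / Real.sqrt (c * d) := by rw [hsum]
        _ = Real.sqrt (c * d) := Real.div_sqrt
  rw [hgoal, Real.sqrt_mul hc0]
  rfl

lemma en_col {H : Matrix (Fin n) (Fin n) ℂ} (hH : H.IsHermitian) (i : Fin n) :
    SubdiffAux.en ⇑(hH.eigenvectorBasis i) = 1 := by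
  have h1 := SubdiffAuxB.unit_col hH i
  rw [SubdiffAux.dot_self_eq] at h1
  have h2 : ∑ j, Complex.normSq (⇑(hH.eigenvectorBasis i) j) = 1 := by exact_mod_cast h1
  rw [SubdiffAux.en, h2, Real.sqrt_one]

lemma schatten_one_zero : schatten 1 (0 : Matrix (Fin n) (Fin n) ℂ) = 0 := by
  have h : (0 : Matrix (Fin n) (Fin n) ℂ) = Matrix.vecMulVec (0 : Fin n → ℂ) 0 := by
    ext i j; simp [Matrix.vecMulVec_apply]
  rw [h, schatten_one_vecMulVec]
  simp [SubdiffAux.en]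

end SubdiffAuxC

/-- the subdifferential of the nuclear norm (`1`-Schatten norm) at `A`
equals `{ G : ‖A‖₁ = Tr(GᴴA) and ‖G‖_∞ ≤ 1 }`, where the subdifferential of the convex
function `‖·‖₁` at `A` is `{G : ∀ B, ‖B‖₁ ≥ ‖A‖₁ + Re Tr(Gᴴ(B − A))}`. -/
theorem subdiff_nuclear_norm {n : ℕ} (A : Matrix (Fin n) (Fin n) ℂ) :
    {G : Matrix (Fin n) (Fin n) ℂ |
        ∀ B, schatten 1 A + (Matrix.trace (Gᴴ * (B - A))).re ≤ schatten 1 B} =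
      {G : Matrix (Fin n) (Fin n) ℂ |
        ((schatten 1 A : ℝ) : ℂ) = Matrix.trace (Gᴴ * A) ∧ matSpectralNorm G ≤ 1} := by

  open SubdiffAux SubdiffAuxB SubdiffAuxC in
  ext G
  simp only [Set.mem_setOf_eq]
  have hsA : 0 ≤ schatten 1 A := schatten_one_nonneg A
  constructor
  · intro h
    set z := Matrix.trace (Gᴴ * A) with hzdef
    -- from B = 0 : `schatten 1 A ≤ z.re`
    have h0 : schatten 1 A ≤ z.re := by
      have h00 := h 0
      rw [schatten_one_zero, zero_sub, Matrix.mul_neg, Matrix.trace_neg] at h00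
      simp only [Complex.neg_re] at h00
      linarith
    -- spectral norm bound
    have hspec : matSpectralNorm G ≤ 1 := by
      set k := z.re - schatten 1 A with hk
      have hcol : ∀ i : Fin n,
          Real.sqrt ((Matrix.isHermitian_conjTranspose_mul_self G).eigenvalues i) ≤ 1 := by
        intro i
        set hGG := Matrix.isHermitian_conjTranspose_mul_self G
        set lam := hGG.eigenvalues i with hlam
        have hlam0 : 0 ≤ lam := eig_nonneg G i
        set v := ⇑(hGG.eigenvectorBasis i) with hv
        set w := G *ᵥ v with hw
        have hone : star v ⬝ᵥ v = 1 := unit_col hGG i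
        have hww : star w ⬝ᵥ w = (lam : ℂ) := by
          rw [hw, dot_self_mulVec, mulvec_col hGG i, dotProduct_smul, hv, hone,
            smul_eq_mul, mul_one]
        have henw : SubdiffAux.en w = Real.sqrt lam := en_mulVec_col G i
        have hstep : ∀ t : ℝ, 0 < t → t * (lam - Real.sqrt lam) ≤ k := by
          intro t ht
          have hB := h (Matrix.vecMulVec ((t : ℂ) • w) (star v))
          have htr : Matrix.trace (Gᴴ * Matrix.vecMulVec ((t : ℂ) • w) (star v))
              = ((t * lam : ℝ) : ℂ) := by
            rw [trace_conjT_mul_vecMulVec, star_star, ← hw, dotProduct_smul, hww,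
              smul_eq_mul]
            push_cast
            ring
          have hsch : schatten 1 (Matrix.vecMulVec ((t : ℂ) • w) (star v))
              = t * Real.sqrt lam := by
            rw [schatten_one_vecMulVec, SubdiffAux.en_smul_real, SubdiffAux.en_star, henw,
              en_col hGG i, abs_of_pos ht, mul_one]
          rw [Matrix.mul_sub, Matrix.trace_sub, hsch, htr] at hB
          simp only [Complex.sub_re, Complex.ofReal_re] at hB
          rw [hk]
          nlinarith [hB]
        -- conclude `lam ≤ 1`
        have hlam1 : lam ≤ 1 := by
          by_contra hlt
          push_neg at hlt
          have hd : 0 < lam - Real.sqrt lam := by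
            have h2 := Real.sq_sqrt hlam0
            have h3 := Real.sqrt_nonneg lam
            nlinarith [sq_nonneg (Real.sqrt lam - 1), sq_nonneg (Real.sqrt lam + 1)]
          have ht : (0 : ℝ) < (|k| + 1) / (lam - Real.sqrt lam) := by positivity
          have := hstep _ ht
          rw [div_mul_cancel₀ _ (ne_of_gt hd)] at this
          have := le_abs_self k
          linarith
        calc Real.sqrt lam ≤ Real.sqrt 1 := Real.sqrt_le_sqrt hlam1
          _ = 1 := Real.sqrt_one
      rcases isEmpty_or_nonempty (Fin n) with he | hne
      · rw [matSpectralNorm, Real.iSup_of_isEmpty]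
        norm_num
      · exact ciSup_le hcol
    -- value of the trace
    have habs : ‖z‖ ≤ schatten 1 A := by
      calc ‖z‖ ≤ matSpectralNorm G * schatten 1 A := key G A
        _ ≤ 1 * schatten 1 A := mul_le_mul_of_nonneg_right hspec hsA
        _ = schatten 1 A := one_mul _
    have hre : z.re = schatten 1 A := le_antisymm (le_trans (Complex.re_le_norm z) habs) h0
    have him : z.im = 0 := by
      have h1 := Complex.sq_norm z
      have h2 : ‖z‖ = z.re :=
        le_antisymm (hre ▸ habs) (Complex.re_le_norm z)
      rw [Complex.normSq_apply, h2] at h1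
      nlinarith [h1]
    refine ⟨?_, hspec⟩
    apply Complex.ext
    · rw [Complex.ofReal_re, hre]
    · rw [Complex.ofReal_im, him]
  · rintro ⟨hz, hs⟩ B
    have hzre : (Matrix.trace (Gᴴ * A)).re = schatten 1 A := by
      rw [← hz]; exact Complex.ofReal_re _
    rw [Matrix.mul_sub, Matrix.trace_sub, Complex.sub_re, hzre]
    have hkey : (Matrix.trace (Gᴴ * B)).re ≤ schatten 1 B := by
      calc (Matrix.trace (Gᴴ * B)).re ≤ ‖Matrix.trace (Gᴴ * B)‖ :=
            Complex.re_le_norm _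
        _ ≤ matSpectralNorm G * schatten 1 B := key G B
        _ ≤ 1 * schatten 1 B := mul_le_mul_of_nonneg_right hs (schatten_one_nonneg B)
        _ = schatten 1 B := one_mul _
    linarith
end

section
/- Let ŵ₁, ..., ŵ_L and ẑ be n×n complex matrices, γ > 0, satisfying the recurrence ŵ_ℓ = γ · ŵ_{ℓ+1}† ⋯ ŵ_L† ẑ ŵ₁† ⋯ ŵ_{ℓ−1}† for all ℓ ∈ {1,...,L} (with empty products equal to the identity). Let β̂ = ŵ_L ⋯ ŵ₁. Then β̂ β̂† = γ^L (ẑ β̂†)^L and β̂† β̂ = γ^L (β̂† ẑ)^L. -/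
open Matrix

/-- `prodConjT w a b = (w a)ᴴ * (w (a+1))ᴴ * ⋯ * (w b)ᴴ` (the empty product `1` when
`b < a`). -/
noncomputable def prodConjT {n : ℕ} (w : ℕ → Matrix (Fin n) (Fin n) ℂ) (a b : ℕ) :
    Matrix (Fin n) (Fin n) ℂ :=
  ((List.range (b + 1 - a)).map (fun i => (w (a + i))ᴴ)).prod

/-- `prodRev w L = w L * w (L−1) * ⋯ * w 1`. -/
noncomputable def prodRev {n : ℕ} (w : ℕ → Matrix (Fin n) (Fin n) ℂ) (L : ℕ) :
    Matrix (Fin n) (Fin n) ℂ :=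
  ((List.range L).map (fun i => w (L - i))).prod

noncomputable def gProd {n : ℕ} (w : ℕ → Matrix (Fin n) (Fin n) ℂ) (a k : ℕ) :
    Matrix (Fin n) (Fin n) ℂ :=
  ((List.range k).map (fun i => (w (a + i))ᴴ)).prod

lemma gProd_zero {n : ℕ} (w : ℕ → Matrix (Fin n) (Fin n) ℂ) (a : ℕ) :
    gProd w a 0 = 1 := by simp [gProd]

lemma gProd_succ' {n : ℕ} (w : ℕ → Matrix (Fin n) (Fin n) ℂ) (a k : ℕ) :
    gProd w a (k + 1) = (w a)ᴴ * gProd w (a + 1) k := by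
  simp only [gProd, List.range_succ_eq_map, List.map_cons, List.prod_cons, List.map_map]
  congr 1
  congr 1
  apply List.map_congr_left
  intro i _
  have : a + (i + 1) = a + 1 + i := by omega
  simp [Function.comp, this]

lemma gProd_one {n : ℕ} (w : ℕ → Matrix (Fin n) (Fin n) ℂ) (a : ℕ) :
    gProd w a 1 = (w a)ᴴ := by
  rw [gProd_succ', gProd_zero, mul_one]

lemma gProd_add {n : ℕ} (w : ℕ → Matrix (Fin n) (Fin n) ℂ) (a j k : ℕ) :
    gProd w a (j + k) = gProd w a j * gProd w (a + j) k := by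
  induction j generalizing a with
  | zero => simp [gProd_zero]
  | succ j ih =>
      have h1 : j + 1 + k = (j + k) + 1 := by omega
      have h2 : a + 1 + j = a + (j + 1) := by omega
      rw [h1, gProd_succ', ih, gProd_succ', mul_assoc, h2]

lemma prodConjT_eq_gProd {n : ℕ} (w : ℕ → Matrix (Fin n) (Fin n) ℂ) (a b : ℕ) :
    prodConjT w a b = gProd w a (b + 1 - a) := rfl

lemma prodRev_succ {n : ℕ} (w : ℕ → Matrix (Fin n) (Fin n) ℂ) (L : ℕ) :
    prodRev w (L + 1) = w (L + 1) * prodRev w L := by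
  simp only [prodRev, List.range_succ_eq_map, List.map_cons, List.prod_cons, List.map_map]
  have h : (fun i => w (L + 1 - i)) ∘ Nat.succ = fun i => w (L - i) := by
    funext i
    simp [Nat.succ_sub_succ]
  simp [h]

lemma prodRev_conjT {n : ℕ} (w : ℕ → Matrix (Fin n) (Fin n) ℂ) (L : ℕ) :
    (prodRev w L)ᴴ = gProd w 1 L := by
  induction L with
  | zero => simp [prodRev, gProd]
  | succ L ih =>
      rw [prodRev_succ, conjTranspose_mul, ih, gProd_add w 1 L 1]
      have h : (1:ℕ) + L = L + 1 := Nat.add_comm 1 L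
      rw [h, gProd_one]

/-- if `ŵ_ℓ = γ ŵ_{ℓ+1}† ⋯ ŵ_L† ẑ ŵ₁† ⋯ ŵ_{ℓ−1}†` for all `ℓ = 1,…,L`,
then with `β̂ = ŵ_L ⋯ ŵ₁` we have `β̂β̂† = γ^L (ẑβ̂†)^L` and `β̂†β̂ = γ^L (β̂†ẑ)^L`. -/
theorem beta_recursion {n L : ℕ} (hL : 1 ≤ L)
    (w : ℕ → Matrix (Fin n) (Fin n) ℂ) (z : Matrix (Fin n) (Fin n) ℂ)
    (γ : ℝ) (hγ : 0 < γ)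
    (hrec : ∀ ℓ, 1 ≤ ℓ → ℓ ≤ L →
      w ℓ = (γ : ℂ) • (prodConjT w (ℓ + 1) L * z * prodConjT w 1 (ℓ - 1))) :
    prodRev w L * (prodRev w L)ᴴ = ((γ : ℂ) ^ L) • (z * (prodRev w L)ᴴ) ^ L ∧
      (prodRev w L)ᴴ * prodRev w L = ((γ : ℂ) ^ L) • ((prodRev w L)ᴴ * z) ^ L := by
  have hB : (prodRev w L)ᴴ = gProd w 1 L := prodRev_conjT w L
  set B := prodRev w L with hBdef
  -- restated recurrence
  have hrec' : ∀ m, 1 ≤ m → m ≤ L →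
      w m = (γ : ℂ) • (gProd w (m + 1) (L - m) * z * gProd w 1 (m - 1)) := by
    intro m h1 h2
    have h := hrec m h1 h2
    rw [prodConjT_eq_gProd, prodConjT_eq_gProd] at h
    have e1 : L + 1 - (m + 1) = L - m := by omega
    have e2 : m - 1 + 1 - 1 = m - 1 := by omega
    rwa [e1, e2] at h
  -- Claim 1 : downward induction (stated with k = number of remaining factors)
  have claim1 : ∀ k, ∀ m, m + k = L →
      (gProd w (m + 1) k)ᴴ * gProd w (m + 1) k = ((γ : ℂ) ^ k) • (z * Bᴴ) ^ k := by
    intro k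
    induction k with
    | zero => intro m _; simp [gProd_zero]
    | succ k ih =>
        intro m hm
        have hkL : m + 1 ≤ L := by omega
        have hw : w (m + 1) = (γ : ℂ) • (gProd w (m + 1 + 1) k * z * gProd w 1 m) := by
          have h := hrec' (m + 1) (by omega) hkL
          have e1 : L - (m + 1) = k := by omega
          have e2 : m + 1 - 1 = m := by omega
          rwa [e1, e2] at h
        have hG : (gProd w (m + 1) (k + 1))ᴴ = (gProd w (m + 1 + 1) k)ᴴ * w (m + 1) := by
          rw [gProd_succ', conjTranspose_mul, conjTranspose_conjTranspose]
        have hCG : gProd w 1 m * gProd w (m + 1) (k + 1) = Bᴴ := by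
          have h := gProd_add w 1 m (k + 1)
          have e : (1:ℕ) + m = m + 1 := Nat.add_comm 1 m
          rw [e] at h
          have e2 : m + (k + 1) = L := hm
          rw [← h, e2]
          exact hB.symm
        have ihA := ih (m + 1) (by omega)
        calc (gProd w (m + 1) (k + 1))ᴴ * gProd w (m + 1) (k + 1)
            = ((gProd w (m + 1 + 1) k)ᴴ * w (m + 1)) * gProd w (m + 1) (k + 1) := by
              rw [hG]
          _ = ((gProd w (m + 1 + 1) k)ᴴ *
                ((γ : ℂ) • (gProd w (m + 1 + 1) k * z * gProd w 1 m))) *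
                gProd w (m + 1) (k + 1) := by rw [hw]
          _ = (γ : ℂ) • (((gProd w (m + 1 + 1) k)ᴴ * gProd w (m + 1 + 1) k) *
                (z * (gProd w 1 m * gProd w (m + 1) (k + 1)))) := by
              simp only [smul_mul_assoc, mul_smul_comm, mul_assoc]
          _ = (γ : ℂ) • ((((γ : ℂ) ^ k) • (z * Bᴴ) ^ k) * (z * Bᴴ)) := by
              rw [ihA, hCG]
          _ = ((γ : ℂ) ^ (k + 1)) • (z * Bᴴ) ^ (k + 1) := by
              rw [smul_mul_assoc, smul_smul, ← pow_succ]
              congr 1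
              ring
  -- Claim 2 : upward induction
  have claim2 : ∀ m, m ≤ L →
      gProd w 1 m * (gProd w 1 m)ᴴ = ((γ : ℂ) ^ m) • (Bᴴ * z) ^ m := by
    intro m
    induction m with
    | zero => intro _; simp [gProd_zero]
    | succ m ih =>
        intro hm
        have hw : w (m + 1) =
            (γ : ℂ) • (gProd w (m + 1 + 1) (L - (m + 1)) * z * gProd w 1 m) := by
          have h := hrec' (m + 1) (by omega) hm
          have e2 : m + 1 - 1 = m := by omega
          rwa [e2] at h
        have hsplit : gProd w 1 (m + 1) = gProd w 1 m * (w (m + 1))ᴴ := by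
          have h := gProd_add w 1 m 1
          have e : (1:ℕ) + m = m + 1 := Nat.add_comm 1 m
          rw [e, gProd_one] at h
          exact h
        have hDE : gProd w 1 m * ((w (m + 1))ᴴ * gProd w (m + 1 + 1) (L - (m + 1))) = Bᴴ := by
          rw [← gProd_succ' w (m + 1) (L - (m + 1))]
          have h := gProd_add w 1 m (L - (m + 1) + 1)
          have e : (1:ℕ) + m = m + 1 := Nat.add_comm 1 m
          rw [e] at h
          have e2 : m + (L - (m + 1) + 1) = L := by omega
          rw [← h, e2]
          exact hB.symm
        have ihD := ih (by omega)
        rw [hsplit, conjTranspose_mul, conjTranspose_conjTranspose]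
        nth_rewrite 2 [hw]
        calc gProd w 1 m * (w (m + 1))ᴴ *
              (((γ : ℂ) • (gProd w (m + 1 + 1) (L - (m + 1)) * z * gProd w 1 m)) *
                (gProd w 1 m)ᴴ)
            = (γ : ℂ) • ((gProd w 1 m * ((w (m + 1))ᴴ * gProd w (m + 1 + 1) (L - (m + 1)))) *
                (z * (gProd w 1 m * (gProd w 1 m)ᴴ))) := by
              simp only [smul_mul_assoc, mul_smul_comm, mul_assoc]
          _ = (γ : ℂ) • (Bᴴ * (z * (((γ : ℂ) ^ m) • (Bᴴ * z) ^ m))) := by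
              rw [hDE, ihD]
          _ = ((γ : ℂ) ^ (m + 1)) • (Bᴴ * z) ^ (m + 1) := by
              simp only [mul_smul_comm, smul_smul, pow_succ', mul_assoc]
  constructor
  · have h1 := claim1 L 0 (by omega)
    have hBB : B * Bᴴ = (gProd w 1 L)ᴴ * gProd w 1 L := by
      rw [← hB, conjTranspose_conjTranspose]
    rw [hBB]
    exact h1
  · have h2 := claim2 L le_rfl
    have hBB : Bᴴ * B = gProd w 1 L * (gProd w 1 L)ᴴ := by
      rw [← hB, conjTranspose_conjTranspose]
    rw [hBB]
    exact h2
end
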